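/- Lemma 2.8. Let K be a compact subset of the lcsc R-module G, let Γ be an R-submodule of G, and let 𝕏→𝕏′=(X,𝒳′,μ,G)→𝕐 be a short factors series. If L²_FKaap(X,𝒳′,μ,G:Γ)=L²(X,𝒳′,μ), then every φ∈L²(X,𝒳′,μ) is FK ν-almost almost-periodic for the set K∘Γ={f∘g : f∈K, g∈Γ}. -/

import Mathlib

open MeasureTheory Filter Set Topology
open scoped ENNReal

noncomputable section

namespace FE

variable {R G X Y : Type*}

/-- The disintegration `μ = ∫_Y μ_y dν(y)` of `μ` over an extension `π : X → Y`:
each `μ_y` is a probability measure on `X`, `y ↦ μ_y B` is measurable, and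
`μ (B ∩ π⁻¹ A) = ∫_A μ_y B dν`, coding `μ_{π x} B = E_μ(1_B | π⁻¹[𝒴])(x)`. -/
structure Disintegration [mXa : MeasurableSpace X] [mYa : MeasurableSpace Y]
    (μ : Measure X) (ν : Measure Y) (π : X → Y)
    (μy : Y → Measure X) : Prop where
  prob : ∀ y, IsProbabilityMeasure (μy y)
  meas : ∀ B : Set X, MeasurableSet B → Measurable fun y => μy y B
  eq : ∀ B : Set X, MeasurableSet B → ∀ A : Set Y, MeasurableSet A →
    μ (B ∩ π ⁻¹' A) = ∫⁻ y in A, μy y B ∂ν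

/-- The relative product (condition-independent) measure `μ ⊗_Y μ = ∫_Y μ_y ⊗ μ_y dν`. -/
def relProd [mXa : MeasurableSpace X] [mYa : MeasurableSpace Y]
    (ν : Measure Y) (μy : Y → Measure X) : Measure (X × X) :=
  ν.bind fun y => (μy y).prod (μy y)

/-- The relative convolution `H *_Y φ (x) = ∫_X H(x,x') φ(x') dμ_{π x}(x')`. -/
def relConv [mXa : MeasurableSpace X] (μy : Y → Measure X) (π : X → Y)
    (H : X × X → ℂ) (φ : X → ℂ) : X → ℂ :=
  fun x => ∫ x', H (x, x') * φ x' ∂(μy (π x))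

/-- Membership in `L²(X, 𝒳', μ)` where `m'` is a sub-σ-algebra `𝒳'`. -/
def MemL2 (m' : MeasurableSpace X) [mXa : MeasurableSpace X] (μ : Measure X)
    (φ : X → ℂ) : Prop :=
  Measurable[m'] φ ∧ MemLp φ 2 μ

/-- Essential boundedness. -/
def BddAE {α : Type*} [MeasurableSpace α] (ρ : Measure α) (f : α → ℂ) : Prop :=
  ∃ C : ℝ, ∀ᵐ a ∂ρ, ‖f a‖ ≤ C

/-- `φ` is FK almost periodic for `Γ`: for every `ε > 0` there are finitely many
`ψ₁, …, ψ_k ∈ L²(X, 𝒳, μ)` such that for every `g ∈ Γ`,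
`min_j ‖U_g φ − ψ_j‖_{2,y} < ε` for ν-a.e. `y`. -/
def IsFKap [mXa : MeasurableSpace X] [mYa : MeasurableSpace Y] (act : G → X → X)
    (μ : Measure X) (ν : Measure Y) (μy : Y → Measure X)
    (Γ : Set G) (φ : X → ℂ) : Prop :=
  ∀ ε : ℝ, 0 < ε → ∃ (k : ℕ) (ψ : Fin k → X → ℂ),
    (∀ j, MemLp (ψ j) 2 μ) ∧
    ∀ g ∈ Γ, ∀ᵐ y ∂ν,
      ∃ j, eLpNorm (fun x => φ (act g x) - ψ j x) 2 (μy y) < ENNReal.ofReal ε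

/-- `φ` is FK ν-almost almost-periodic for `Γ`: for all `δ, ε > 0` there are finitely many
`ψ₁, …, ψ_k ∈ L²(X, 𝒳, μ)` such that for every `g ∈ Γ`,
`min_j ‖U_g φ − ψ_j‖_{2,y} < ε` outside a set of `y` of ν-measure less than `δ`. -/
def IsFKaap [mXa : MeasurableSpace X] [mYa : MeasurableSpace Y] (act : G → X → X)
    (μ : Measure X) (ν : Measure Y) (μy : Y → Measure X)
    (Γ : Set G) (φ : X → ℂ) : Prop :=
  ∀ δ ε : ℝ, 0 < δ → 0 < ε → ∃ (k : ℕ) (ψ : Fin k → X → ℂ),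
    (∀ j, MemLp (ψ j) 2 μ) ∧
    ∀ g ∈ Γ,
      ν {y | ¬ ∃ j, eLpNorm (fun x => φ (act g x) - ψ j x) 2 (μy y) < ENNReal.ofReal ε}
        < ENNReal.ofReal δ

/-- The extension `π : 𝕏' → 𝕐` is relatively compact for `Γ`:
the FK a.p. (for `Γ`) functions are dense in `L²(X, 𝒳', μ)`. -/
def RelCompact (m' : MeasurableSpace X) [mXa : MeasurableSpace X] [mYa : MeasurableSpace Y]
    (act : G → X → X) (μ : Measure X) (ν : Measure Y) (μy : Y → Measure X)
    (Γ : Set G) : Prop :=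
  ∀ φ : X → ℂ, MemL2 m' μ φ → ∀ ε : ℝ, 0 < ε →
    ∃ ψ : X → ℂ, MemL2 m' μ ψ ∧ IsFKap act μ ν μy Γ ψ ∧
      eLpNorm (fun x => φ x - ψ x) 2 μ < ENNReal.ofReal ε

/-- `H` is invariant (a.e. with respect to `ρ`) for the diagonal `Γ`-action on `X × X`. -/
def DiagInvariant [mXa : MeasurableSpace X] (act : G → X → X) (ρ : Measure (X × X)) (Γ : Set G)
    (H : X × X → ℂ) : Prop :=
  ∀ g ∈ Γ, (fun p : X × X => H (act g p.1, act g p.2)) =ᵐ[ρ] H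

/-- The extension `π : 𝕏' → 𝕐` is jointly relatively weak-mixing for `Γ`:
every `Γ`-invariant `H ∈ L²(X×X, 𝒳'⊗𝒳', μ⊗_Yμ)` is a.e. a function on `𝕐`
via `π ×_Y π`. -/
def JointRelWM (m' : MeasurableSpace X) [mXa : MeasurableSpace X] [mYa : MeasurableSpace Y]
    (act : G → X → X) (ν : Measure Y) (μy : Y → Measure X) (π : X → Y)
    (Γ : Set G) : Prop :=
  ∀ H : X × X → ℂ, Measurable[m'.prod m'] H → MemLp H 2 (relProd ν μy) →
    DiagInvariant act (relProd ν μy) Γ H →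
    ∃ h : Y → ℂ, Measurable h ∧ H =ᵐ[relProd ν μy] fun p => h (π p.1)

/-- The extension of `𝕐` with σ-algebra `m'` on `X` is nontrivial:
`π⁻¹[𝒴] ≠ m'` (μ-mod 0). -/
def NontrivialExt (m' : MeasurableSpace X) [mXa : MeasurableSpace X] [mYa : MeasurableSpace Y]
    (μ : Measure X) (π : X → Y) : Prop :=
  ∃ A : Set X, MeasurableSet[m'] A ∧
    ∀ B : Set Y, MeasurableSet B → μ (symmDiff A (π ⁻¹' B)) ≠ 0

/-- The extension `π : 𝕏' → 𝕐` is jointly relatively ergodic for `Γ`: every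
`Γ`-invariant `f ∈ L^∞(X, 𝒳', μ)` is μ-a.e. a function on `𝕐`. -/
def JointRelErg (m' : MeasurableSpace X) [mXa : MeasurableSpace X] [mYa : MeasurableSpace Y]
    (act : G → X → X) (μ : Measure X) (π : X → Y) (Γ : Set G) : Prop :=
  ∀ f : X → ℂ, Measurable[m'] f → MemLp f ⊤ μ →
    (∀ g ∈ Γ, (fun x => f (act g x)) =ᵐ[μ] f) →
    ∃ h : Y → ℂ, Measurable h ∧ f =ᵐ[μ] fun x => h (π x)

/-- `Γ` is an `R`-submodule of the `R`-module `G` (with scalar action `σ`):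
a subgroup closed under scalar multiplication. -/
def IsSubmoduleSet [Group G] (σ : R → G → G) (Γ : Set G) : Prop :=
  (1 : G) ∈ Γ ∧ (∀ a ∈ Γ, ∀ b ∈ Γ, a * b ∈ Γ) ∧ (∀ a ∈ Γ, a⁻¹ ∈ Γ) ∧
    ∀ t : R, ∀ a ∈ Γ, σ t a ∈ Γ

/-- `G` is a Noetherian `R`-module: the ascending chain condition on `R`-submodules. -/
def NoetherianModule [Group G] (σ : R → G → G) : Prop :=
  ∀ c : ℕ → Set G, (∀ n, IsSubmoduleSet σ (c n)) → (∀ n, c n ⊆ c (n + 1)) →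
    ∃ N, ∀ n, N ≤ n → c n = c N

/-- The ring `R` is syndetic: for every `r ≠ 0` the set `rR` is syndetic in `R`,
i.e. `K + rR = R` for some compact `K`. -/
def SyndeticRing (R : Type*) [Ring R] [TopologicalSpace R] : Prop :=
  ∀ r : R, r ≠ 0 → ∃ K : Set R, IsCompact K ∧ ∀ x : R, ∃ k ∈ K, ∃ s : R, x = k + r * s

/-- The extension `π : 𝕏' → 𝕐` is totally relatively weak-mixing for `Γ`:
for every `g ∈ Γ` with `g ≠ I`, every `⟨g⟩_R`-invariant `H ∈ L²(μ⊗_Yμ)` is a.e.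
a function on `𝕐`. -/
def TotallyRelWM (m' : MeasurableSpace X) [mXa : MeasurableSpace X] [mYa : MeasurableSpace Y]
    [Group G] (σ : R → G → G) (act : G → X → X) (ν : Measure Y)
    (μy : Y → Measure X) (π : X → Y) (Γ : Set G) : Prop :=
  ∀ g ∈ Γ, g ≠ (1 : G) →
    JointRelWM m' act ν μy π (Set.range fun t : R => σ t g)

/-- The extension `π : (X, m', μ, G) → 𝕐` is primitive. -/
def PrimitiveExt (m' : MeasurableSpace X) [mXa : MeasurableSpace X] [mYa : MeasurableSpace Y]
    [Group G] (σ : R → G → G) (act : G → X → X) (μ : Measure X) (ν : Measure Y)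
    (μy : Y → Measure X) (π : X → Y) : Prop :=
  TotallyRelWM m' σ act ν μy π Set.univ ∨
  RelCompact m' act μ ν μy Set.univ ∨
  ∃ Grc Grw : Set G, IsSubmoduleSet σ Grc ∧ IsSubmoduleSet σ Grw ∧
    Grc ≠ ({1} : Set G) ∧ Grw ≠ ({1} : Set G) ∧ Grc ∩ Grw = ({1} : Set G) ∧
    (∀ g : G, ∃ a ∈ Grc, ∃ b ∈ Grw, g = a * b) ∧
    RelCompact m' act μ ν μy Grc ∧ TotallyRelWM m' σ act ν μy π Grw

/-- Condition C1: the relative convolutions `H *_Y φ`, with `H` bounded `Γ`-invariant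
in `L²(μ⊗_Yμ)` and `φ` bounded in `L²(X,𝒳',μ)`, span a dense subspace of `L²(X,𝒳',μ)`. -/
def C1 (m' : MeasurableSpace X) [mXa : MeasurableSpace X] [mYa : MeasurableSpace Y]
    (act : G → X → X) (μ : Measure X) (ν : Measure Y) (μy : Y → Measure X)
    (π : X → Y) (Γ : Set G) : Prop :=
  ∀ f : X → ℂ, MemL2 m' μ f → ∀ ε : ℝ, 0 < ε →
    ∃ (k : ℕ) (c : Fin k → ℂ) (H : Fin k → X × X → ℂ) (φ : Fin k → X → ℂ),
      (∀ i, Measurable[m'.prod m'] (H i) ∧ MemLp (H i) 2 (relProd ν μy) ∧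
        BddAE (relProd ν μy) (H i) ∧ DiagInvariant act (relProd ν μy) Γ (H i)) ∧
      (∀ i, MemL2 m' μ (φ i) ∧ BddAE μ (φ i)) ∧
      eLpNorm (fun x => f x - ∑ i, c i * relConv μy π (H i) (φ i) x) 2 μ
        < ENNReal.ofReal ε

/-- Condition C2: the FK a.p. (for `Γ`) functions are dense in `L²(X,𝒳',μ)`. -/
def C2 (m' : MeasurableSpace X) [mXa : MeasurableSpace X] [mYa : MeasurableSpace Y]
    (act : G → X → X) (μ : Measure X) (ν : Measure Y) (μy : Y → Measure X)
    (Γ : Set G) : Prop :=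
  RelCompact m' act μ ν μy Γ

/-- Condition C3: every `φ ∈ L²(X,𝒳',μ)` admits, for each `δ > 0`, a set `B ∈ 𝒴` with
`ν(B) > 1 − δ` such that the modification `φ_B = 1_{π⁻¹[B]}·φ` is FK a.p. for `Γ`. -/
def C3 (m' : MeasurableSpace X) [mXa : MeasurableSpace X] [mYa : MeasurableSpace Y]
    (act : G → X → X) (μ : Measure X) (ν : Measure Y) (μy : Y → Measure X)
    (π : X → Y) (Γ : Set G) : Prop :=
  ∀ φ : X → ℂ, MemL2 m' μ φ → ∀ δ : ℝ, 0 < δ →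
    ∃ B : Set Y, MeasurableSet B ∧ 1 - δ < (ν B).toReal ∧
      IsFKap act μ ν μy Γ ((π ⁻¹' B).indicator φ)

/-- Condition C4: every `φ ∈ L²(X,𝒳',μ)` is FK ν-almost almost-periodic for `Γ`. -/
def C4 (m' : MeasurableSpace X) [mXa : MeasurableSpace X] [mYa : MeasurableSpace Y]
    (act : G → X → X) (μ : Measure X) (ν : Measure Y) (μy : Y → Measure X)
    (Γ : Set G) : Prop :=
  ∀ φ : X → ℂ, MemL2 m' μ φ → IsFKaap act μ ν μy Γ φ

/-- A measure on `G` carried by `Γ` and left-invariant under elements of `Γ`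
(a left Haar measure of `Γ`). -/
def LeftInvariantOn [Group G] [MeasurableSpace G] (mΓ : Measure G) (Γ : Set G) : Prop :=
  mΓ Γᶜ = 0 ∧
    ∀ g ∈ Γ, ∀ A : Set G, MeasurableSet A → mΓ ((fun h => g * h) ⁻¹' A) = mΓ A

/-- A weak Følner sequence in `Γ` for the measure `mΓ`. -/
def IsWeakFolner [Group G] [TopologicalSpace G] [MeasurableSpace G]
    (mΓ : Measure G) (Γ : Set G) (F : ℕ → Set G) : Prop :=
  (∀ n, IsCompact (F n)) ∧ (∀ n, F n ⊆ Γ) ∧ (∀ n, 0 < mΓ (F n)) ∧ (∀ n, mΓ (F n) < ⊤) ∧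
    ∀ g ∈ Γ, Tendsto (fun n => mΓ (symmDiff ((fun h => g * h) '' F n) (F n)) / mΓ (F n))
      atTop (nhds 0)

/-- The Følner average `(1/m_Γ(F_n)) ∫_{F_n} U_g (φ ⊗ φ̄) dg` as a function on `X × X`. -/
def FolnerAvg [MeasurableSpace G] (act : G → X → X) (mΓ : Measure G) (F : ℕ → Set G)
    (φ : X → ℂ) (n : ℕ) : X × X → ℂ :=
  fun p => (mΓ (F n)).toReal⁻¹ •
    ∫ g in F n, φ (act g p.1) * (starRingEnd ℂ) (φ (act g p.2)) ∂mΓ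

/-- Condition C5: for any weak Følner sequence in `Γ` and any `φ ∈ L²(X,𝒳',μ)`,
the weak `L²(μ⊗_Yμ)`-limit `P(φ⊗φ̄)` of the Følner averages vanishes iff `φ = 0`. -/
def C5 (m' : MeasurableSpace X) [mXa : MeasurableSpace X] [mYa : MeasurableSpace Y]
    [Group G] [TopologicalSpace G] [MeasurableSpace G]
    (act : G → X → X) (μ : Measure X) (ν : Measure Y) (μy : Y → Measure X)
    (Γ : Set G) : Prop :=
  ∀ mΓ : Measure G, LeftInvariantOn mΓ Γ →
  ∀ F : ℕ → Set G, IsWeakFolner mΓ Γ F →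
  ∀ φ : X → ℂ, MemL2 m' μ φ →
  ∀ P : X × X → ℂ, MemLp P 2 (relProd ν μy) →
    (∀ ψ : X × X → ℂ, MemLp ψ 2 (relProd ν μy) →
      Tendsto
        (fun n => ∫ p, FolnerAvg act mΓ F φ n p * (starRingEnd ℂ) (ψ p) ∂(relProd ν μy))
        atTop (nhds (∫ p, P p * (starRingEnd ℂ) (ψ p) ∂(relProd ν μy)))) →
    (P =ᵐ[relProd ν μy] 0 ↔ φ =ᵐ[μ] 0)

/-- Condition C6: as C5 but with the limit taken in the `L²(μ⊗_Yμ)`-norm. -/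
def C6 (m' : MeasurableSpace X) [mXa : MeasurableSpace X] [mYa : MeasurableSpace Y]
    [Group G] [TopologicalSpace G] [MeasurableSpace G]
    (act : G → X → X) (μ : Measure X) (ν : Measure Y) (μy : Y → Measure X)
    (Γ : Set G) : Prop :=
  ∀ mΓ : Measure G, LeftInvariantOn mΓ Γ →
  ∀ F : ℕ → Set G, IsWeakFolner mΓ Γ F →
  ∀ φ : X → ℂ, MemL2 m' μ φ →
  ∀ P : X × X → ℂ, MemLp P 2 (relProd ν μy) →
    Tendsto (fun n => eLpNorm (fun p => FolnerAvg act mΓ F φ n p - P p) 2 (relProd ν μy))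
      atTop (nhds 0) →
    (P =ᵐ[relProd ν μy] 0 ↔ φ =ᵐ[μ] 0)

/-- Disintegration of `μ` over a factor given by a sub-σ-algebra `m₁` of the ambient
σ-algebra, via conditional measures `μc x`. -/
structure CondDisint (m₁ : MeasurableSpace X) [mXa : MeasurableSpace X] (μ : Measure X)
    (μc : X → Measure X) : Prop where
  prob : ∀ x, IsProbabilityMeasure (μc x)
  meas : ∀ B : Set X, MeasurableSet B → Measurable[m₁] fun x => μc x B
  eq : ∀ B : Set X, MeasurableSet B → ∀ A : Set X, MeasurableSet[m₁] A →
    μ (B ∩ A) = ∫⁻ x in A, μc x B ∂μ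

/-- The relative product measure over a factor via conditional measures. -/
def relProdC [mXa : MeasurableSpace X] (μ : Measure X) (μc : X → Measure X) : Measure (X × X) :=
  μ.bind fun x => (μc x).prod (μc x)

/-- FK almost periodicity, fiber measures given by conditional measures. -/
def IsFKapC [mXa : MeasurableSpace X] (act : G → X → X) (μ : Measure X) (μc : X → Measure X)
    (Γ : Set G) (φ : X → ℂ) : Prop :=
  ∀ ε : ℝ, 0 < ε → ∃ (k : ℕ) (ψ : Fin k → X → ℂ),
    (∀ j, MemLp (ψ j) 2 μ) ∧
    ∀ g ∈ Γ, ∀ᵐ x ∂μ,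
      ∃ j, eLpNorm (fun z => φ (act g z) - ψ j z) 2 (μc x) < ENNReal.ofReal ε

/-- FK almost almost-periodicity, fiber measures given by conditional measures. -/
def IsFKaapC [mXa : MeasurableSpace X] (act : G → X → X) (μ : Measure X) (μc : X → Measure X)
    (Γ : Set G) (φ : X → ℂ) : Prop :=
  ∀ δ ε : ℝ, 0 < δ → 0 < ε → ∃ (k : ℕ) (ψ : Fin k → X → ℂ),
    (∀ j, MemLp (ψ j) 2 μ) ∧
    ∀ g ∈ Γ,
      μ {x | ¬ ∃ j, eLpNorm (fun z => φ (act g z) - ψ j z) 2 (μc x) < ENNReal.ofReal ε}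
        < ENNReal.ofReal δ

/-- Relative compactness of the extension `(X,m₂,μ,G) → (X,m₁,μ,G)` for `Γ`,
with conditional measures `μc` over the base `m₁`. -/
def RelCompactC (m₂ : MeasurableSpace X) [mXa : MeasurableSpace X]
    (act : G → X → X) (μ : Measure X) (μc : X → Measure X) (Γ : Set G) : Prop :=
  ∀ φ : X → ℂ, MemL2 m₂ μ φ → ∀ ε : ℝ, 0 < ε →
    ∃ ψ : X → ℂ, MemL2 m₂ μ ψ ∧ IsFKapC act μ μc Γ ψ ∧
      eLpNorm (fun x => φ x - ψ x) 2 μ < ENNReal.ofReal ε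

/-- Relative C4-compactness: every function of `L²(X,m₂,μ)` is FK a.a.p. for `Γ`
relative to the base factor (whose conditional measures are `μc`). -/
def RelC4CompactC (m₂ : MeasurableSpace X) [mXa : MeasurableSpace X]
    (act : G → X → X) (μ : Measure X) (μc : X → Measure X) (Γ : Set G) : Prop :=
  ∀ φ : X → ℂ, MemL2 m₂ μ φ → IsFKaapC act μ μc Γ φ

/-- Joint relative weak-mixing of `(X,m₂,μ,G) → (X,m₁,μ,G)` for `Γ`. -/
def JointRelWMC (m₂ m₁ : MeasurableSpace X) [mXa : MeasurableSpace X]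
    (act : G → X → X) (μ : Measure X) (μc : X → Measure X) (Γ : Set G) : Prop :=
  ∀ H : X × X → ℂ, Measurable[m₂.prod m₂] H → MemLp H 2 (relProdC μ μc) →
    DiagInvariant act (relProdC μ μc) Γ H →
    ∃ h : X → ℂ, Measurable[m₁] h ∧ H =ᵐ[relProdC μ μc] fun p => h p.1

/-- Total relative weak-mixing of `(X,m₂,μ,G) → (X,m₁,μ,G)` for `Γ`. -/
def TotallyRelWMC (m₂ m₁ : MeasurableSpace X) [mXa : MeasurableSpace X] [Group G]
    (σ : R → G → G) (act : G → X → X) (μ : Measure X)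
    (μc : X → Measure X) (Γ : Set G) : Prop :=
  ∀ g ∈ Γ, g ≠ (1 : G) →
    JointRelWMC m₂ m₁ act μ μc (Set.range fun t : R => σ t g)

/-- Primitivity of the extension `(X,m₂,μ,G) → (X,m₁,μ,G)`. -/
def PrimitiveExtC (m₂ m₁ : MeasurableSpace X) [mXa : MeasurableSpace X] [Group G]
    (σ : R → G → G) (act : G → X → X) (μ : Measure X)
    (μc : X → Measure X) : Prop :=
  TotallyRelWMC m₂ m₁ σ act μ μc Set.univ ∨
  RelCompactC m₂ act μ μc Set.univ ∨
  ∃ Grc Grw : Set G, IsSubmoduleSet σ Grc ∧ IsSubmoduleSet σ Grw ∧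
    Grc ≠ ({1} : Set G) ∧ Grw ≠ ({1} : Set G) ∧ Grc ∩ Grw = ({1} : Set G) ∧
    (∀ g : G, ∃ a ∈ Grc, ∃ b ∈ Grw, g = a * b) ∧
    RelCompactC m₂ act μ μc Grc ∧ TotallyRelWMC m₂ m₁ σ act μ μc Grw

/-- Nontriviality of the extension given by the pair of σ-algebras `m₂ ⊇ m₁` (μ-mod 0). -/
def NontrivialPair (m₂ m₁ : MeasurableSpace X) [mXa : MeasurableSpace X]
    (μ : Measure X) : Prop :=
  ∃ A : Set X, MeasurableSet[m₂] A ∧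
    ∀ B : Set X, MeasurableSet[m₁] B → μ (symmDiff A B) ≠ 0

/-- Equality of two σ-algebras μ-mod 0. -/
def EqMod0 (m₁ m₂ : MeasurableSpace X) [mXa : MeasurableSpace X] (μ : Measure X) : Prop :=
  (∀ A : Set X, MeasurableSet[m₁] A → ∃ B, MeasurableSet[m₂] B ∧ μ (symmDiff A B) = 0) ∧
  (∀ A : Set X, MeasurableSet[m₂] A → ∃ B, MeasurableSet[m₁] B ∧ μ (symmDiff A B) = 0)

end FE

/-! The orbit map `g ↦ φ ∘ act g` is continuous into `L²(μ)` (Steinhaus' theorem applied to the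
sets of `g` for which `φ ∘ act g` is close to a member of a countable dense subset), so finitely
many translates `φ ∘ act f'` approximate every `φ ∘ act f`, `f ∈ K`, within `η` in `L²(μ)`.
Since `act h` preserves `μ`, `φ ∘ act (f h)` is then within `η` of `(φ ∘ act f') ∘ act h`, and
by Chebyshev's inequality for the fiber norms `‖·‖_{2,y}` the two are `ε/2`-close off a set of
`y` of measure `≤ η² / (ε/2)²`. Each `φ ∘ act f'` is FK a.a.p. for `Γ` by hypothesis, and the
union of their finitely many families of witnesses works for `K Γ`. -/

section LpNorm

variable {α β E : Type*} [MeasurableSpace α] [MeasurableSpace β] [NormedAddCommGroup E]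
  {p : ℝ≥0∞}

theorem eLpNorm_sub_le_eLpNorm_sub_add_eLpNorm_sub {μ : Measure α} {f g h : α → E}
    (hf : AEStronglyMeasurable f μ) (hg : AEStronglyMeasurable g μ)
    (hh : AEStronglyMeasurable h μ) (hp : 1 ≤ p) :
    eLpNorm (fun x => f x - h x) p μ ≤
      eLpNorm (fun x => f x - g x) p μ + eLpNorm (fun x => g x - h x) p μ := by
  have := eLpNorm_add_le (hf.sub hg) (hg.sub hh) hp
  rwa [sub_add_sub_cancel] at this

theorem measurable_eLpNorm_measure (hp0 : p ≠ 0) (hp : p ≠ ∞) {f : α → E}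
    (hf : StronglyMeasurable f) {μ : β → Measure α} (hμ : Measurable μ) :
    Measurable fun b => eLpNorm f p (μ b) := by
  simp_rw [eLpNorm_eq_lintegral_rpow_enorm_toReal hp0 hp]
  exact ((Measure.measurable_lintegral (hf.enorm.pow_const _)).comp hμ).pow_const _

theorem measurable_eLpNorm_prod_right {μ : Measure α} [SFinite μ] (hp0 : p ≠ 0) (hp : p ≠ ∞)
    {F : β × α → E} (hF : StronglyMeasurable F) :
    Measurable fun b => eLpNorm (fun a => F (b, a)) p μ := by
  simp_rw [eLpNorm_eq_lintegral_rpow_enorm_toReal hp0 hp]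
  exact (Measurable.lintegral_prod_right (hF.enorm.pow_const _)).pow_const _

end LpNorm

section Koopman

variable {G X E : Type*} [Group G] [MeasurableSpace X] [NormedAddCommGroup E]
  {μ : Measure X} {p : ℝ≥0∞} {act : G → X → X} {φ : X → E}

theorem eLpNorm_comp_act_sub_comp_act_eq_mul_inv
    (hactmul : ∀ g h x, act (g * h) x = act g (act h x)) (hact : ∀ g, Measurable (act g))
    (hμ : ∀ g, MeasurePreserving (act g) μ μ) (hφ : StronglyMeasurable φ) (a b : G) :
    eLpNorm (fun x => φ (act a x) - φ (act b x)) p μ =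
      eLpNorm (fun x => φ (act (a * b⁻¹) x) - φ (act 1 x)) p μ := by
  have hmeas : AEStronglyMeasurable (fun x => φ (act (a * b⁻¹) x) - φ (act 1 x)) μ :=
    ((hφ.comp_measurable (hact _)).sub (hφ.comp_measurable (hact 1))).aestronglyMeasurable
  have hcomp : (fun x => φ (act a x) - φ (act b x)) =
      (fun x => φ (act (a * b⁻¹) x) - φ (act 1 x)) ∘ act b := by
    ext x
    simp [← hactmul]
  rw [hcomp, eLpNorm_comp_measurePreserving hmeas (hμ b)]

variable [TopologicalSpace G] [IsTopologicalGroup G] [LocallyCompactSpace G] [MeasurableSpace G]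
  [BorelSpace G] [SFinite μ] [Fact (1 ≤ p)] [TopologicalSpace.SeparableSpace (Lp E p μ)]

theorem exists_haar_pos_eLpNorm_comp_act_sub_comp_act_lt (hp : p ≠ ∞)
    (hact : Measurable fun q : G × X => act q.1 q.2) (hμ : ∀ g, MeasurePreserving (act g) μ μ)
    (hφ : StronglyMeasurable φ) (hφp : MemLp φ p μ) {c : ℝ≥0∞} (hc : 0 < c) :
    ∃ A : Set G, MeasurableSet A ∧ 0 < Measure.haar A ∧
      ∀ a ∈ A, ∀ b ∈ A, eLpNorm (fun x => φ (act a x) - φ (act b x)) p μ < c := by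
  have hp0 : p ≠ 0 := (zero_lt_one.trans_le Fact.out).ne'
  let ψ : ℕ → X → E := fun n => TopologicalSpace.denseSeq (Lp E p μ) n
  let A : ℕ → Set G := fun n => {g | eLpNorm (fun x => φ (act g x) - ψ n x) p μ < c / 2}
  have hA : ∀ n, MeasurableSet (A n) := fun n =>
    measurableSet_lt (measurable_eLpNorm_prod_right hp0 hp
      (F := fun q : G × X => φ (act q.1 q.2) - ψ n q.2)
      ((hφ.comp_measurable hact).sub ((Lp.stronglyMeasurable _).comp_measurable
        measurable_snd))) measurable_const
  have hcover : ∀ g, ∃ n, g ∈ A n := by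
    intro g
    have hg := hφp.comp_measurePreserving (hμ g)
    obtain ⟨_, ⟨n, rfl⟩, hn⟩ := EMetric.mem_closure_iff.1
      (TopologicalSpace.denseRange_denseSeq _ (hg.toLp _)) (c / 2) (ENNReal.half_pos hc.ne')
    refine ⟨n, lt_of_eq_of_lt (eLpNorm_congr_ae ?_) ((Lp.edist_def _ _).symm.trans_lt hn)⟩
    filter_upwards [hg.coeFn_toLp] with x hx
    simp [hx, ψ]
  obtain ⟨n, hn⟩ : ∃ n, 0 < Measure.haar (A n) := by
    by_contra! h
    have := measure_iUnion_null fun n => nonpos_iff_eq_zero.1 (h n)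
    rw [iUnion_eq_univ_iff.2 hcover] at this
    exact (isOpen_univ.measure_ne_zero Measure.haar univ_nonempty) this
  have hactg : ∀ g, Measurable (act g) := fun g => hact.comp measurable_prodMk_left
  refine ⟨A n, hA n, hn, fun a ha b hb => ?_⟩
  calc eLpNorm (fun x => φ (act a x) - φ (act b x)) p μ
      ≤ eLpNorm (fun x => φ (act a x) - ψ n x) p μ +
        eLpNorm (fun x => ψ n x - φ (act b x)) p μ :=
        eLpNorm_sub_le_eLpNorm_sub_add_eLpNorm_sub
          (hφ.comp_measurable (hactg a)).aestronglyMeasurable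
          (Lp.stronglyMeasurable _).aestronglyMeasurable
          (hφ.comp_measurable (hactg b)).aestronglyMeasurable Fact.out
    _ < c / 2 + c / 2 :=
        ENNReal.add_lt_add ha ((eLpNorm_sub_comm (ψ n) (fun x => φ (act b x)) p μ).trans_lt hb)
    _ = c := ENNReal.add_halves c

variable [SigmaCompactSpace G]

theorem eventually_eLpNorm_comp_act_sub_comp_act_lt (hp : p ≠ ∞)
    (hactmul : ∀ g h x, act (g * h) x = act g (act h x))
    (hact : Measurable fun q : G × X => act q.1 q.2) (hμ : ∀ g, MeasurePreserving (act g) μ μ)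
    (hφ : StronglyMeasurable φ) (hφp : MemLp φ p μ) {c : ℝ≥0∞} (hc : 0 < c) (f : G) :
    ∀ᶠ g in 𝓝 f, eLpNorm (fun x => φ (act g x) - φ (act f x)) p μ < c := by
  obtain ⟨A, hA, hApos, hAc⟩ :=
    exists_haar_pos_eLpNorm_comp_act_sub_comp_act_lt hp hact hμ hφ hφp hc
  have hlim : Tendsto (fun g => g * f⁻¹) (𝓝 f) (𝓝 1) := by
    simpa using (continuous_mul_const f⁻¹).tendsto f
  have hactg : ∀ g, Measurable (act g) := fun g => hact.comp measurable_prodMk_left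
  filter_upwards [hlim (Measure.div_mem_nhds_one_of_haar_pos Measure.haar A hA hApos)]
    with g ⟨a, ha, b, hb, hab⟩
  rw [eLpNorm_comp_act_sub_comp_act_eq_mul_inv hactmul hactg hμ hφ, ← show a / b = g * f⁻¹ from hab,
    div_eq_mul_inv, ← eLpNorm_comp_act_sub_comp_act_eq_mul_inv hactmul hactg hμ hφ]
  exact hAc a ha b hb

theorem IsCompact.exists_finset_eLpNorm_comp_act_sub_comp_act_lt {K : Set G} (hK : IsCompact K)
    (hp : p ≠ ∞) (hactmul : ∀ g h x, act (g * h) x = act g (act h x))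
    (hact : Measurable fun q : G × X => act q.1 q.2) (hμ : ∀ g, MeasurePreserving (act g) μ μ)
    (hφ : StronglyMeasurable φ) (hφp : MemLp φ p μ) {c : ℝ≥0∞} (hc : 0 < c) :
    ∃ t : Finset G, ∀ f ∈ K, ∃ f' ∈ t, eLpNorm (fun x => φ (act f x) - φ (act f' x)) p μ < c := by
  obtain ⟨t, -, ht⟩ := hK.elim_nhds_subcover
    (fun f' => {f | eLpNorm (fun x => φ (act f x) - φ (act f' x)) p μ < c})
    fun f' _ => eventually_eLpNorm_comp_act_sub_comp_act_lt hp hactmul hact hμ hφ hφp hc f'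
  exact ⟨t, fun f hf => by simpa using ht hf⟩

end Koopman

namespace FE

section Fibers

variable {X Y E : Type*} [MeasurableSpace X] [MeasurableSpace Y] [NormedAddCommGroup E]
  {μ : Measure X} {ν : Measure Y} {π : X → Y} {μy : Y → Measure X} {p : ℝ≥0∞}

theorem Disintegration.measurable (hdis : Disintegration μ ν π μy) : Measurable μy :=
  Measure.measurable_of_measurable_coe _ hdis.meas

theorem Disintegration.bind_eq (hdis : Disintegration μ ν π μy) : ν.bind μy = μ := by
  ext B hB
  rw [Measure.bind_apply hB hdis.measurable.aemeasurable]
  simpa using (hdis.eq B hB univ .univ).symm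

theorem Disintegration.ae_ae (hdis : Disintegration μ ν π μy) {P : X → Prop}
    (hP : ∀ᵐ x ∂μ, P x) : ∀ᵐ y ∂ν, ∀ᵐ x ∂μy y, P x :=
  Measure.ae_ae_of_ae_bind hdis.measurable.aemeasurable (hdis.bind_eq ▸ hP)

theorem Disintegration.eLpNorm_eLpNorm (hdis : Disintegration μ ν π μy) (hp0 : p ≠ 0)
    (hp : p ≠ ∞) {f : X → E} (hf : StronglyMeasurable f) :
    eLpNorm (fun y => eLpNorm f p (μy y)) p ν = eLpNorm f p μ := by
  have hp' : p.toReal ≠ 0 := ENNReal.toReal_ne_zero.2 ⟨hp0, hp⟩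
  simp_rw [eLpNorm_eq_lintegral_rpow_enorm_toReal hp0 hp, enorm_eq_self,
    ← ENNReal.rpow_mul, one_div_mul_cancel hp', ENNReal.rpow_one]
  rw [← hdis.bind_eq, Measure.lintegral_bind hdis.measurable.aemeasurable
    (hf.enorm.pow_const _).aemeasurable]

theorem Disintegration.mul_meas_ge_le_pow_eLpNorm (hdis : Disintegration μ ν π μy)
    (hp0 : p ≠ 0) (hp : p ≠ ∞) {f : X → E} (hf : StronglyMeasurable f) (c : ℝ≥0∞) :
    c ^ p.toReal * ν {y | c ≤ eLpNorm f p (μy y)} ≤ eLpNorm f p μ ^ p.toReal := by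
  simpa [hdis.eLpNorm_eLpNorm hp0 hp hf] using mul_meas_ge_le_pow_eLpNorm' ν hp0 hp
    (measurable_eLpNorm_measure hp0 hp hf hdis.measurable).aestronglyMeasurable c

theorem Disintegration.meas_ge_le_of_eLpNorm_lt (hdis : Disintegration μ ν π μy) {f : X → E}
    (hf : StronglyMeasurable f) {ε δ : ℝ} (hε : 0 < ε) (hδ : 0 ≤ δ)
    (hfμ : eLpNorm f 2 μ < ENNReal.ofReal (ε * √δ)) :
    ν {y | ENNReal.ofReal ε ≤ eLpNorm f 2 (μy y)} ≤ ENNReal.ofReal δ := by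
  have hε2 : ENNReal.ofReal (ε ^ 2) ≠ 0 := by
    rw [ne_eq, ENNReal.ofReal_eq_zero, not_le]
    positivity
  refine (ENNReal.mul_le_mul_iff_right hε2 ENNReal.ofReal_ne_top).1 ?_
  calc ENNReal.ofReal (ε ^ 2) * ν {y | ENNReal.ofReal ε ≤ eLpNorm f 2 (μy y)}
      = ENNReal.ofReal ε ^ (2 : ℝ≥0∞).toReal * ν {y | ENNReal.ofReal ε ≤ eLpNorm f 2 (μy y)} := by
        rw [ENNReal.toReal_ofNat, ENNReal.rpow_two, ENNReal.ofReal_pow hε.le]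
    _ ≤ eLpNorm f 2 μ ^ (2 : ℝ≥0∞).toReal :=
        hdis.mul_meas_ge_le_pow_eLpNorm two_ne_zero ENNReal.ofNat_ne_top hf _
    _ ≤ ENNReal.ofReal (ε * √δ) ^ (2 : ℝ≥0∞).toReal :=
        ENNReal.rpow_le_rpow hfμ.le ENNReal.toReal_nonneg
    _ = ENNReal.ofReal (ε ^ 2) * ENNReal.ofReal δ := by
        rw [ENNReal.toReal_ofNat, ENNReal.rpow_two, ← ENNReal.ofReal_pow (by positivity),
          ← ENNReal.ofReal_mul (by positivity), mul_pow, Real.sq_sqrt hδ]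

end Fibers

section FKaap

variable {G X Y : Type*} [MeasurableSpace X] [MeasurableSpace Y]
  {μ : Measure X} {ν : Measure Y} {π : X → Y} {μy : Y → Measure X} {act : G → X → X}
  {Γ : Set G} {φ : X → ℂ}

theorem isFKaap_of_finset
    (h : ∀ δ ε : ℝ, 0 < δ → 0 < ε → ∃ S : Finset (X → ℂ), (∀ ψ ∈ S, MemLp ψ 2 μ) ∧
      ∀ g ∈ Γ, ν {y | ¬ ∃ ψ ∈ S, eLpNorm (fun x => φ (act g x) - ψ x) 2 (μy y) <
        ENNReal.ofReal ε} < ENNReal.ofReal δ) :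
    IsFKaap act μ ν μy Γ φ := by
  intro δ ε hδ hε
  obtain ⟨S, hSmem, hS⟩ := h δ ε hδ hε
  refine ⟨S.card, fun j => S.equivFin.symm j, fun j => hSmem _ (S.equivFin.symm j).2,
    fun g hg => (measure_mono fun y hy => ?_).trans_lt (hS g hg)⟩
  rintro ⟨ψ, hψS, hψ⟩
  exact hy ⟨S.equivFin ⟨ψ, hψS⟩, by simpa using hψ⟩

/- `IsFKaap` only provides witnesses that are `μ`-a.e. strongly measurable; the triangle
inequality for the fiber norms `‖·‖_{2,y}` needs measurable ones. -/
theorem IsFKaap.exists_finset_stronglyMeasurable (hdis : Disintegration μ ν π μy)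
    (h : IsFKaap act μ ν μy Γ φ) {δ ε : ℝ} (hδ : 0 < δ) (hε : 0 < ε) :
    ∃ S : Finset (X → ℂ), (∀ ψ ∈ S, StronglyMeasurable ψ ∧ MemLp ψ 2 μ) ∧
      ∀ g ∈ Γ, ν {y | ¬ ∃ ψ ∈ S, eLpNorm (fun x => φ (act g x) - ψ x) 2 (μy y) <
        ENNReal.ofReal ε} < ENNReal.ofReal δ := by
  classical
  obtain ⟨k, ψ, hψ, hbad⟩ := h δ ε hδ hε
  have hfib : ∀ᵐ y ∂ν, ∀ j, ψ j =ᵐ[μy y] (hψ j).1.mk :=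
    ae_all_iff.2 fun j => hdis.ae_ae (hψ j).1.ae_eq_mk
  refine ⟨Finset.univ.image fun j => (hψ j).1.mk, ?_, fun g hg => ?_⟩
  · simp only [Finset.mem_image, Finset.mem_univ, true_and, forall_exists_index]
    rintro _ j rfl
    exact ⟨(hψ j).1.stronglyMeasurable_mk, (hψ j).ae_eq (hψ j).1.ae_eq_mk⟩
  refine (measure_mono_ae ?_).trans_lt (hbad g hg)
  filter_upwards [hfib] with y hy hyS ⟨j, hj⟩
  refine hyS ⟨_, Finset.mem_image_of_mem _ (Finset.mem_univ j), (eLpNorm_congr_ae ?_).trans_lt hj⟩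
  filter_upwards [hy j] with x hx
  rw [hx]

theorem isFKaap_of_approx (hdis : Disintegration μ ν π μy) (hact : ∀ g, Measurable (act g))
    (hφ : StronglyMeasurable φ) {Γ' : Set G}
    (happrox : ∀ η : ℝ≥0∞, 0 < η → ∃ s : Finset (X → ℂ),
      (∀ θ ∈ s, StronglyMeasurable θ ∧ IsFKaap act μ ν μy Γ θ) ∧
      ∀ g ∈ Γ', ∃ h ∈ Γ, ∃ θ ∈ s, eLpNorm (fun x => φ (act g x) - θ (act h x)) 2 μ < η) :
    IsFKaap act μ ν μy Γ' φ := by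
  classical
  refine isFKaap_of_finset fun δ ε hδ hε => ?_
  obtain ⟨s, hs, hclose⟩ := happrox (ENNReal.ofReal (ε / 2 * √(δ / 2)))
    (ENNReal.ofReal_pos.2 (by positivity))
  choose S hSmeas hSbad using fun θ : s =>
    (hs θ θ.2).2.exists_finset_stronglyMeasurable hdis (half_pos hδ) (half_pos hε)
  refine ⟨Finset.univ.biUnion S, fun ψ hψ => ?_, fun g hg => ?_⟩
  · obtain ⟨θ, -, hψθ⟩ := Finset.mem_biUnion.1 hψ
    exact (hSmeas θ ψ hψθ).2
  obtain ⟨h, hh, θ, hθ, hgθ⟩ := hclose g hg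
  have hφg : StronglyMeasurable fun x => φ (act g x) := hφ.comp_measurable (hact g)
  have hθh : StronglyMeasurable fun x => θ (act h x) := (hs θ hθ).1.comp_measurable (hact h)
  set B := {y | ENNReal.ofReal (ε / 2) ≤ eLpNorm (fun x => φ (act g x) - θ (act h x)) 2 (μy y)}
  have hB : ν B ≤ ENNReal.ofReal (δ / 2) :=
    hdis.meas_ge_le_of_eLpNorm_lt (hφg.sub hθh) (half_pos hε) (half_pos hδ).le hgθ
  have hbad : {y | ¬∃ ψ ∈ Finset.univ.biUnion S,
      eLpNorm (fun x => φ (act g x) - ψ x) 2 (μy y) < ENNReal.ofReal ε} ⊆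
      {y | ¬∃ ψ ∈ S ⟨θ, hθ⟩, eLpNorm (fun x => θ (act h x) - ψ x) 2 (μy y) <
        ENNReal.ofReal (ε / 2)} ∪ B := by
    intro y hy
    by_contra hy'
    simp only [mem_union, mem_ofPred_eq, not_or, not_not, not_le, B] at hy'
    obtain ⟨⟨ψ, hψS, hψ⟩, hD⟩ := hy'
    refine hy ⟨ψ, Finset.mem_biUnion.2 ⟨_, Finset.mem_univ _, hψS⟩, ?_⟩
    calc eLpNorm (fun x => φ (act g x) - ψ x) 2 (μy y)
        ≤ eLpNorm (fun x => φ (act g x) - θ (act h x)) 2 (μy y) +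
          eLpNorm (fun x => θ (act h x) - ψ x) 2 (μy y) :=
          eLpNorm_sub_le_eLpNorm_sub_add_eLpNorm_sub hφg.aestronglyMeasurable
            hθh.aestronglyMeasurable (hSmeas _ ψ hψS).1.aestronglyMeasurable one_le_two
      _ < ENNReal.ofReal (ε / 2) + ENNReal.ofReal (ε / 2) := ENNReal.add_lt_add hD hψ
      _ = ENNReal.ofReal ε := by
          rw [← ENNReal.ofReal_add (by positivity) (by positivity), add_halves]
  calc _ ≤ _ := measure_mono hbad
    _ ≤ _ := measure_union_le _ _
    _ < ENNReal.ofReal (δ / 2) + ENNReal.ofReal (δ / 2) :=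
        ENNReal.add_lt_add_of_lt_of_le (ne_top_of_le_ne_top ENNReal.ofReal_ne_top hB)
          (hSbad _ h hh) hB
    _ = ENNReal.ofReal δ := by
        rw [← ENNReal.ofReal_add (by positivity) (by positivity), add_halves]

theorem isFKaap_image2_mul [Group G] [TopologicalSpace G] [IsTopologicalGroup G]
    [LocallyCompactSpace G] [SigmaCompactSpace G] [MeasurableSpace G] [BorelSpace G] [SFinite μ]
    [TopologicalSpace.SeparableSpace (Lp ℂ 2 μ)] (hdis : Disintegration μ ν π μy)
    (hactmul : ∀ g h x, act (g * h) x = act g (act h x))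
    (hact : Measurable fun q : G × X => act q.1 q.2) (hμ : ∀ g, MeasurePreserving (act g) μ μ)
    {K : Set G} (hK : IsCompact K) (hφ : StronglyMeasurable φ) (hφ2 : MemLp φ 2 μ)
    (hKΓ : ∀ f, IsFKaap act μ ν μy Γ fun x => φ (act f x)) :
    IsFKaap act μ ν μy (image2 (· * ·) K Γ) φ := by
  classical
  have hactg : ∀ g, Measurable (act g) := fun g => hact.comp measurable_prodMk_left
  refine isFKaap_of_approx (Γ := Γ) hdis hactg hφ fun η hη => ?_
  obtain ⟨t, ht⟩ := hK.exists_finset_eLpNorm_comp_act_sub_comp_act_lt ENNReal.ofNat_ne_top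
    hactmul hact hμ hφ hφ2 hη
  refine ⟨t.image fun f x => φ (act f x), ?_, ?_⟩
  · simp only [Finset.mem_image, forall_exists_index, and_imp]
    rintro _ f - rfl
    exact ⟨hφ.comp_measurable (hactg f), hKΓ f⟩
  rintro _ ⟨f, hf, h, hh, rfl⟩
  obtain ⟨f', hf', hff'⟩ := ht f hf
  refine ⟨h, hh, _, Finset.mem_image_of_mem _ hf', ?_⟩
  have hcomp : (fun x => φ (act (f * h) x) - φ (act f' (act h x))) =
      (fun x => φ (act f x) - φ (act f' x)) ∘ act h := by
    ext x
    simp [hactmul]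
  have hmeas : AEStronglyMeasurable (fun x => φ (act f x) - φ (act f' x)) μ :=
    ((hφ.comp_measurable (hactg f)).sub (hφ.comp_measurable (hactg f'))).aestronglyMeasurable
  rwa [hcomp, eLpNorm_comp_measurePreserving hmeas (hμ h)]

end FKaap

end FE

theorem lemma_2_8_general
    {G X Y : Type*}
    [CommGroup G] [TopologicalSpace G] [IsTopologicalGroup G]
    [LocallyCompactSpace G] [SecondCountableTopology G]
    [MeasurableSpace G] [BorelSpace G]
    (m' : MeasurableSpace X)
    [mX : MeasurableSpace X] [StandardBorelSpace X]
    [mY : MeasurableSpace Y]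
    (μ : Measure X) [IsProbabilityMeasure μ]
    (ν : Measure Y)
    (act : G → X → X)
    (hactmul : ∀ g h x, act (g * h) x = act g (act h x))
    (hactMeas : Measurable fun p : G × X => act p.1 p.2)
    (hactμ : ∀ g, MeasurePreserving (act g) μ μ)
    (π : X → Y)
    (hm'le : m' ≤ mX)
    (hm'inv : ∀ (g : G) (A : Set X), MeasurableSet[m'] A → MeasurableSet[m'] (act g ⁻¹' A))
    (μy : Y → Measure X) (hdis : FE.Disintegration μ ν π μy)
    (K : Set G) (hK : IsCompact K)
    (Γ : Set G)
    (hall : ∀ φ : X → ℂ, FE.MemL2 m' μ φ → FE.IsFKaap act μ ν μy Γ φ) :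
    ∀ φ : X → ℂ, FE.MemL2 m' μ φ →
      FE.IsFKaap act μ ν μy (Set.image2 (· * ·) K Γ) φ := by
  rintro φ ⟨hφm', hφ2⟩
  -- makes `L²(μ)` separable
  have : Fact ((2 : ℝ≥0∞) ≠ ∞) := ⟨ENNReal.ofNat_ne_top⟩
  exact FE.isFKaap_image2_mul hdis hactmul hactMeas hactμ hK
    (hφm'.mono hm'le le_rfl).stronglyMeasurable hφ2 fun f =>
      hall _ ⟨hφm'.comp fun A hA => hm'inv f A hA, hφ2.comp_measurePreserving (hactμ f)⟩

/-- **Lemma 2.8.** Let `K` be a compact subset of the lcsc `R`-module `G` and `Γ`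
an `R`-submodule of `G`. If `L²_FKaap(X,𝒳',μ,G:Γ) = L²(X,𝒳',μ)`, then every
`φ ∈ L²(X,𝒳',μ)` is FK ν-almost almost-periodic for `K ∘ Γ = {f ∘ g : f ∈ K, g ∈ Γ}`. -/
theorem lemma_2_8
    {R G X Y : Type*}
    [Ring R] [TopologicalSpace R] [IsTopologicalAddGroup R]
    [LocallyCompactSpace R] [SecondCountableTopology R] [T2Space R]
    [CommGroup G] [TopologicalSpace G] [IsTopologicalGroup G]
    [LocallyCompactSpace G] [SecondCountableTopology G] [T2Space G]
    [MeasurableSpace G] [BorelSpace G]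
    (m' : MeasurableSpace X)
    [mX : MeasurableSpace X] [StandardBorelSpace X]
    [mY : MeasurableSpace Y]
    (σ : R → G → G)
    (hσmul : ∀ (t : R) (S T : G), σ t (S * T) = σ t S * σ t T)
    (hσadd : ∀ (r t : R) (S : G), σ (r + t) S = σ r S * σ t S)
    (hσcont : Continuous fun p : R × G => σ p.1 p.2)
    (μ : Measure X) [IsProbabilityMeasure μ]
    (ν : Measure Y) [IsProbabilityMeasure ν]
    (act : G → X → X)
    (hact1 : ∀ x, act 1 x = x)
    (hactmul : ∀ g h x, act (g * h) x = act g (act h x))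
    (hactMeas : Measurable fun p : G × X => act p.1 p.2)
    (hactμ : ∀ g, MeasurePreserving (act g) μ μ)
    (actY : G → Y → Y)
    (hactY1 : ∀ y, actY 1 y = y)
    (hactYmul : ∀ g h y, actY (g * h) y = actY g (actY h y))
    (hactYMeas : Measurable fun p : G × Y => actY p.1 p.2)
    (hactYν : ∀ g, MeasurePreserving (actY g) ν ν)
    (π : X → Y) (hπ : Measurable π) (hπmp : MeasurePreserving π μ ν)
    (hπeq : ∀ g x, π (act g x) = actY g (π x))
    (hm'le : m' ≤ mX)
    (hm'Y : MeasurableSpace.comap π mY ≤ m')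
    (hm'inv : ∀ (g : G) (A : Set X), MeasurableSet[m'] A → MeasurableSet[m'] (act g ⁻¹' A))
    (μy : Y → Measure X) (hdis : FE.Disintegration μ ν π μy)
    (K : Set G) (hK : IsCompact K)
    (Γ : Set G) (hΓ : FE.IsSubmoduleSet σ Γ)
    (hall : ∀ φ : X → ℂ, FE.MemL2 m' μ φ → FE.IsFKaap act μ ν μy Γ φ) :
    ∀ φ : X → ℂ, FE.MemL2 m' μ φ →
      FE.IsFKaap act μ ν μy (Set.image2 (· * ·) K Γ) φ :=
  lemma_2_8_general m' (mX := mX) (mY := mY) μ ν act hactmul hactMeas hactμ π hm'le hm'inv μy hdis K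
    hK Γ hall
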